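/- Rapid decay of the non-resonant half-wave contribution (the paper's claim that replacing e^{−itP} by e^{itP} produces an O(λ^{−N}) kernel). Let n ≥ 1, let Ψ : ℝ → ℂ be Schwartz, and let β ∈ C_c^∞(ℝ) be supported in {t : 1/2 < |t| < 2}. For λ, μ, T > 0 and w ∈ ℝⁿ define J_{λ,μ,T}(w) = (2π)^{−n} T^{−1} ∫_{ℝⁿ} ( ∫_ℝ e^{it(λ + |ξ|)} β(t/μ) 𝓕Ψ(t/T) dt ) e^{i⟨w,ξ⟩} dξ (an iterated integral; the inner integral defines an absolutely integrable function of ξ). For every N ∈ ℕ there exists C_N, depending only on n, β, Ψ, N, such that for all λ ≥ 2, all μ, T with 1 ≤ μ ≤ T ≤ λ, and all w ∈ ℝⁿ, |J_{λ,μ,T}(w)| ≤ C_N λ^{−N}. -/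

import Mathlib

/-! The inner `t`-integral is the Fourier transform of the amplitude `a(t) = β(t/μ) 𝓕Ψ(t/T)` at
the frequency `λ + |ξ| ≥ λ`, so the phase is never stationary. Integrating by parts
`k = N + n + 2` times gains `(λ + |ξ|)^{-k}`, while `a^{(k)}` is bounded uniformly in `1 ≤ μ ≤ T`
(dilations by factors `≤ 1` do not increase derivatives) and is supported in `|t| ≤ 2μ ≤ 2λ`.
Since `λ (λ + |ξ|)^{-k} ≤ λ^{-N} (1 + |ξ|)^{-(n+1)}`, the outer `ξ`-integral converges, with a bound
independent of `w`. -/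

open MeasureTheory Complex Finset
open scoped FourierTransform Real SchwartzMap

section Oscillatory

variable {E : Type*} [NormedAddCommGroup E] [NormedSpace ℂ E]

lemma HasCompactSupport.integrable_iteratedDeriv {f : ℝ → E} {k m : ℕ} (hf : ContDiff ℝ k f)
    (hc : HasCompactSupport f) (hm : m ≤ k) : Integrable (iteratedDeriv m f) := by
  refine (hf.continuous_iteratedDeriv m (by exact_mod_cast hm)).integrable_of_hasCompactSupport ?_
  rw [iteratedDeriv_eq_equiv_comp]
  exact (hc.iteratedFDeriv m).comp_left (map_zero _)

lemma pow_mul_norm_fourier_le_integral_norm_iteratedDeriv {f : ℝ → E} {k : ℕ}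
    (hf : ContDiff ℝ k f) (hint : ∀ m ≤ k, Integrable (iteratedDeriv m f)) (w : ℝ) :
    (2 * π * |w|) ^ k * ‖𝓕 f w‖ ≤ ∫ t, ‖iteratedDeriv k f t‖ := by
  have hderiv := congrFun (Real.fourier_iteratedDeriv (N := k) hf
    (fun m hm => hint m (by exact_mod_cast hm)) le_rfl) w
  calc (2 * π * |w|) ^ k * ‖𝓕 f w‖ = ‖𝓕 (iteratedDeriv k f) w‖ := by
        rw [hderiv, norm_smul, norm_pow]
        simp [abs_of_pos Real.pi_pos]
    _ ≤ ∫ t, ‖iteratedDeriv k f t‖ := VectorFourier.norm_fourierIntegral_le_integral_norm _ _ _ _ _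

lemma integral_exp_mul_I_smul_eq_fourier (f : ℝ → E) (r : ℝ) :
    ∫ t : ℝ, exp (I * (t * r)) • f t = 𝓕 f (-(r / (2 * π))) := by
  rw [Real.fourier_eq']
  congr 1 with t
  congr 2
  simp only [RCLike.inner_apply, conj_trivial]
  push_cast
  field_simp

-- `k`-fold integration by parts, in the form `𝓕 (f⁽ᵏ⁾) w = (2πiw)ᵏ 𝓕 f w`.
lemma norm_integral_exp_mul_I_smul_le {f : ℝ → E} {k : ℕ} (hf : ContDiff ℝ k f)
    (hc : HasCompactSupport f) {r : ℝ} (hr : r ≠ 0) :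
    ‖∫ t : ℝ, exp (I * (t * r)) • f t‖ ≤ (|r| ^ k)⁻¹ * ∫ t, ‖iteratedDeriv k f t‖ := by
  have hdecay := pow_mul_norm_fourier_le_integral_norm_iteratedDeriv hf
    (fun m hm => hc.integrable_iteratedDeriv hf hm) (-(r / (2 * π)))
  have hfreq : 2 * π * |-(r / (2 * π))| = |r| := by
    rw [abs_neg, abs_div, abs_of_pos (by positivity : (0:ℝ) < 2 * π)]
    field_simp
  rw [hfreq] at hdecay
  rw [integral_exp_mul_I_smul_eq_fourier, le_inv_mul_iff₀ (by positivity)]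
  exact hdecay

end Oscillatory

namespace SchwartzMap

variable {F : Type*} [NormedAddCommGroup F] [NormedSpace ℝ F]

lemma norm_iteratedDeriv_comp_mul_le (f : 𝓢(ℝ, F)) (i : ℕ) {a : ℝ} (ha : |a| ≤ 1) (x : ℝ) :
    ‖iteratedDeriv i (fun t => f (a * t)) x‖ ≤ SchwartzMap.seminorm ℝ 0 i f := by
  rw [iteratedDeriv_comp_const_smul ((f.smooth ⊤).of_le (by exact_mod_cast le_top)), norm_smul,
    norm_pow, Real.norm_eq_abs]
  calc |a| ^ i * ‖iteratedDeriv i f (a * x)‖ ≤ ‖iteratedDeriv i f (a * x)‖ :=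
        mul_le_of_le_one_left (norm_nonneg _) (pow_le_one₀ (abs_nonneg a) ha)
    _ ≤ SchwartzMap.seminorm ℝ 0 i f := by simpa using f.le_seminorm' ℝ 0 i (a * x)

variable {A : Type*} [NormedRing A] [NormedAlgebra ℝ A]

lemma norm_iteratedDeriv_comp_mul_mul_le (f g : 𝓢(ℝ, A)) (k : ℕ) {a b : ℝ} (ha : |a| ≤ 1)
    (hb : |b| ≤ 1) (x : ℝ) :
    ‖iteratedDeriv k (fun t => f (a * t) * g (b * t)) x‖ ≤
      ∑ i ∈ range (k + 1), (k.choose i : ℝ) * SchwartzMap.seminorm ℝ 0 i f *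
        SchwartzMap.seminorm ℝ 0 (k - i) g := by
  have hdil {h : 𝓢(ℝ, A)} {c : ℝ} : ContDiff ℝ (⊤ : ℕ∞) (fun t => h (c * t)) :=
    (h.smooth ⊤).comp (contDiff_const.mul contDiff_id)
  rw [← norm_iteratedFDeriv_eq_norm_iteratedDeriv]
  refine (norm_iteratedFDeriv_mul_le hdil hdil x (by exact_mod_cast le_top)).trans
    (sum_le_sum fun i _ => ?_)
  simp only [norm_iteratedFDeriv_eq_norm_iteratedDeriv]
  gcongr
  · exact f.norm_iteratedDeriv_comp_mul_le i ha x
  · exact g.norm_iteratedDeriv_comp_mul_le (k - i) hb x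

end SchwartzMap

lemma integral_norm_le_of_support_subset {X E : Type*} [MeasurableSpace X] {μ : Measure X}
    [NormedAddCommGroup E] {h : X → E} {s : Set X} {B : ℝ} (hs : μ s < ⊤)
    (hsupp : Function.support h ⊆ s) (hB : ∀ x ∈ s, ‖h x‖ ≤ B) :
    ∫ x, ‖h x‖ ∂μ ≤ B * μ.real s := by
  have hvanish : ∀ x ∉ s, ‖h x‖ = 0 := fun x hx =>
    norm_eq_zero.mpr (Function.notMem_support.mp fun hx' => hx (hsupp hx'))
  rw [← setIntegral_eq_integral_of_forall_compl_eq_zero hvanish]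
  exact (le_abs_self _).trans
    (norm_setIntegral_le_of_norm_le_const (f := fun x => ‖h x‖) hs (by simpa using hB))

lemma support_iteratedDeriv_subset {F : Type*} [NormedAddCommGroup F] [NormedSpace ℝ F]
    (f : ℝ → F) (k : ℕ) : Function.support (iteratedDeriv k f) ⊆ tsupport f := by
  rw [iteratedDeriv_eq_equiv_comp]
  exact (Function.support_comp_subset (LinearIsometryEquiv.map_zero _) _).trans
    (support_iteratedFDeriv_subset k)

lemma exists_norm_integral_exp_mul_dilations_le (f g : 𝓢(ℝ, ℂ))
    (hf : HasCompactSupport f) (k : ℕ) :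
    ∃ B : ℝ, 0 ≤ B ∧ ∀ μ T r : ℝ, 1 ≤ μ → 1 ≤ T → r ≠ 0 →
      ‖∫ t : ℝ, exp (I * (t * r)) * f (t / μ) * g (t / T)‖ ≤ (|r| ^ k)⁻¹ * (B * μ) := by
  obtain ⟨R, hR0, hR⟩ := hf.isCompact.isBounded.subset_closedBall_lt 0 0
  set D := ∑ i ∈ range (k + 1), (k.choose i : ℝ) * SchwartzMap.seminorm ℝ 0 i f *
    SchwartzMap.seminorm ℝ 0 (k - i) g
  refine ⟨D * (2 * R), by positivity, fun μ T r hμ hT hr => ?_⟩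
  have hμ0 : 0 < μ := by linarith
  set a : ℝ → ℂ := fun t => f (μ⁻¹ * t) * g (T⁻¹ * t) with ha
  have ha_supp : Function.support a ⊆ Set.Icc (-(R * μ)) (R * μ) := by
    intro t ht
    have hft : μ⁻¹ * t ∈ Metric.closedBall 0 R :=
      hR (subset_tsupport _ (left_ne_zero_of_mul ht))
    rw [mem_closedBall_zero_iff, Real.norm_eq_abs, abs_mul, abs_inv, abs_of_pos hμ0,
      inv_mul_le_iff₀ hμ0] at hft
    exact abs_le.mp (by linarith)
  have ha_tsupp : tsupport a ⊆ Set.Icc (-(R * μ)) (R * μ) := closure_minimal ha_supp isClosed_Icc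
  have ha_smooth : ContDiff ℝ k a :=
    ((f.smooth k).comp (contDiff_const.mul contDiff_id)).mul
      ((g.smooth k).comp (contDiff_const.mul contDiff_id))
  have hL1 : ∫ t, ‖iteratedDeriv k a t‖ ≤ D * (2 * R) * μ := by
    refine (integral_norm_le_of_support_subset measure_Icc_lt_top
      ((support_iteratedDeriv_subset a k).trans ha_tsupp) fun t _ =>
        f.norm_iteratedDeriv_comp_mul_mul_le g k ?_ ?_ t).trans_eq ?_
    · rw [abs_inv, abs_of_pos hμ0]
      exact inv_le_one_of_one_le₀ hμ
    · rw [abs_inv, abs_of_pos (by linarith)]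
      exact inv_le_one_of_one_le₀ hT
    · rw [Real.volume_real_Icc_of_le (by nlinarith)]
      ring
  calc ‖∫ t : ℝ, exp (I * (t * r)) * f (t / μ) * g (t / T)‖
      = ‖∫ t : ℝ, exp (I * (t * r)) • a t‖ := by
        simp only [ha, smul_eq_mul, mul_assoc, div_eq_inv_mul]
    _ ≤ (|r| ^ k)⁻¹ * ∫ t, ‖iteratedDeriv k a t‖ :=
      norm_integral_exp_mul_I_smul_le ha_smooth
        (isCompact_Icc.of_isClosed_subset (isClosed_tsupport a) ha_tsupp) hr
    _ ≤ (|r| ^ k)⁻¹ * (D * (2 * R) * μ) := by gcongr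

lemma integrable_inv_one_add_norm_pow {E : Type*} [NormedAddCommGroup E] [NormedSpace ℝ E]
    [FiniteDimensional ℝ E] [MeasurableSpace E] [BorelSpace E] {μ : Measure E}
    [μ.IsAddHaarMeasure] {m : ℕ} (hm : Module.finrank ℝ E < m) :
    Integrable (fun x : E => ((1 + ‖x‖) ^ m)⁻¹) μ := by
  refine (integrable_one_add_norm (μ := μ) (r := m) (by exact_mod_cast hm)).congr
    (Filter.Eventually.of_forall fun x => ?_)
  simp [Real.rpow_neg (by positivity : 0 ≤ 1 + ‖x‖)]

lemma inv_pow_add_mul_le {lam μ x : ℝ} (N m : ℕ) (hμ : μ ≤ lam) (hlam : 1 ≤ lam)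
    (hx : 0 ≤ x) : ((lam + x) ^ (N + 1 + m))⁻¹ * μ ≤ (lam ^ N)⁻¹ * ((1 + x) ^ m)⁻¹ := by
  have hsplit : lam ^ (N + 1) * (1 + x) ^ m ≤ (lam + x) ^ (N + 1 + m) := by
    rw [pow_add (lam + x)]
    gcongr
    linarith
  rw [← mul_inv, inv_mul_le_iff₀ (by positivity)]
  calc μ ≤ lam := hμ
    _ = lam ^ (N + 1) * (1 + x) ^ m * (lam ^ N * (1 + x) ^ m)⁻¹ := by
      field_simp
      ring
    _ ≤ (lam + x) ^ (N + 1 + m) * (lam ^ N * (1 + x) ^ m)⁻¹ :=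
      mul_le_mul_of_nonneg_right hsplit (by positivity)

/-- The kernel `J_{λ,μ,T}(w)` of the non-resonant half-wave branch on `ℝⁿ`:
`J(w) = (2π)^{-n} T⁻¹ ∫_ξ (∫_t e^{it(λ+|ξ|)} β(t/μ) 𝓕Ψ(t/T) dt) e^{i⟨w,ξ⟩} dξ`. -/
noncomputable def nonResonantWaveKernel (n : ℕ) (Ψ : ℝ → ℂ) (β : ℝ → ℝ)
    (lam μ T : ℝ) (w : EuclideanSpace ℝ (Fin n)) : ℂ :=
  ((((2 * Real.pi) ^ n)⁻¹ : ℝ) : ℂ) * ((T⁻¹ : ℝ) : ℂ) *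
    ∫ ξ : EuclideanSpace ℝ (Fin n),
      (∫ t : ℝ,
          Complex.exp (Complex.I * (t * (lam + ‖ξ‖))) *
            ((β (t / μ) : ℝ) : ℂ) * FourierTransform.fourier Ψ (t / T)) *
        Complex.exp (Complex.I * ((inner ℝ w ξ : ℝ) : ℂ))

lemma norm_nonResonantWaveKernel_le_integral {n : ℕ} {Ψ : ℝ → ℂ} {β : ℝ → ℝ} {lam μ T : ℝ}
    (hT : 1 ≤ T) {g : EuclideanSpace ℝ (Fin n) → ℝ} (hg : Integrable g)
    (hbound : ∀ ξ : EuclideanSpace ℝ (Fin n),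
      ‖∫ t : ℝ, exp (I * (t * (lam + ‖ξ‖))) * ((β (t / μ) : ℝ) : ℂ) * 𝓕 Ψ (t / T)‖ ≤ g ξ)
    (w : EuclideanSpace ℝ (Fin n)) :
    ‖nonResonantWaveKernel n Ψ β lam μ T w‖ ≤ ∫ ξ, g ξ := by
  have hprefactor : ‖((((2 * π) ^ n)⁻¹ : ℝ) : ℂ) * ((T⁻¹ : ℝ) : ℂ)‖ ≤ 1 := by
    rw [← ofReal_mul, norm_real, Real.norm_of_nonneg (by positivity)]
    exact mul_le_one₀ (inv_le_one_of_one_le₀ (one_le_pow₀ (by linarith [Real.pi_gt_three])))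
      (by positivity) (inv_le_one_of_one_le₀ hT)
  have hintegrand : ∀ ξ : EuclideanSpace ℝ (Fin n),
      ‖(∫ t : ℝ, exp (I * (t * (lam + ‖ξ‖))) * ((β (t / μ) : ℝ) : ℂ) * 𝓕 Ψ (t / T)) *
        exp (I * ((inner ℝ w ξ : ℝ) : ℂ))‖ ≤ g ξ := fun ξ => by
    rw [norm_mul, mul_comm I, norm_exp_ofReal_mul_I, mul_one]
    exact hbound ξ
  rw [nonResonantWaveKernel, norm_mul]
  calc _ ≤ 1 * ∫ ξ, g ξ := mul_le_mul hprefactor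
        (norm_integral_le_of_norm_le hg (Filter.Eventually.of_forall hintegrand))
        (norm_nonneg _) zero_le_one
    _ = ∫ ξ, g ξ := one_mul _

theorem nonResonantWaveKernel_rapid_decay_general
    (n : ℕ) (Ψ : SchwartzMap ℝ ℂ) (β : ℝ → ℝ)
    (hβsm : ContDiff ℝ (⊤ : ℕ∞) β)
    (hβsupp : Function.support β ⊆ {t : ℝ | 1 / 2 < |t| ∧ |t| < 2})
    (N : ℕ) :
    ∃ C : ℝ, 0 < C ∧
      ∀ lam μ T : ℝ, 2 ≤ lam → 1 ≤ μ → μ ≤ T → T ≤ lam →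
        ∀ w : EuclideanSpace ℝ (Fin n),
          ‖nonResonantWaveKernel n (fun s => Ψ s) β lam μ T w‖ ≤ C * lam ^ (-(N : ℝ)) := by
  have hβc : HasCompactSupport (fun s => (β s : ℂ)) :=
    (HasCompactSupport.of_support_subset_isCompact (isCompact_Icc (a := -2) (b := 2))
      fun t ht => abs_le.mp (hβsupp ht).2.le).comp_left ofReal_zero
  obtain ⟨B, hB0, hB⟩ := exists_norm_integral_exp_mul_dilations_le
    (hβc.toSchwartzMap (ofRealCLM.contDiff.comp hβsm)) (𝓕 Ψ) hβc (N + 1 + (n + 1))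
  have hint : Integrable (fun ξ : EuclideanSpace ℝ (Fin n) => ((1 + ‖ξ‖) ^ (n + 1))⁻¹) :=
    integrable_inv_one_add_norm_pow (by simp)
  set Cn := ∫ ξ : EuclideanSpace ℝ (Fin n), ((1 + ‖ξ‖) ^ (n + 1))⁻¹
  have hCn : 0 ≤ Cn := integral_nonneg fun ξ => by positivity
  refine ⟨B * Cn + 1, by positivity, fun lam μ T hlam hμ hμT hT w => ?_⟩
  have hbound (ξ : EuclideanSpace ℝ (Fin n)) :
      ‖∫ t : ℝ, exp (I * (t * (lam + ‖ξ‖))) * ((β (t / μ) : ℝ) : ℂ) * 𝓕 (fun s => Ψ s) (t / T)‖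
        ≤ B * ((lam ^ N)⁻¹ * ((1 + ‖ξ‖) ^ (n + 1))⁻¹) := by
    have hr : 0 < lam + ‖ξ‖ := by positivity
    have hamp := hB μ T (lam + ‖ξ‖) hμ (hμ.trans hμT) hr.ne'
    push_cast [abs_of_pos hr, mul_left_comm _ B] at hamp
    exact hamp.trans (mul_le_mul_of_nonneg_left
      (inv_pow_add_mul_le N (n + 1) (hμT.trans hT) (by linarith) (norm_nonneg ξ)) hB0)
  calc ‖nonResonantWaveKernel n (fun s => Ψ s) β lam μ T w‖
      ≤ ∫ ξ, B * ((lam ^ N)⁻¹ * ((1 + ‖ξ‖) ^ (n + 1))⁻¹) :=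
        norm_nonResonantWaveKernel_le_integral (by linarith) ((hint.const_mul _).const_mul _)
          hbound w
    _ = B * Cn * (lam ^ N)⁻¹ := by simp only [integral_const_mul]; ring
    _ ≤ (B * Cn + 1) * lam ^ (-(N : ℝ)) := by
      rw [Real.rpow_neg (by positivity), Real.rpow_natCast]
      gcongr
      linarith

/-- **Rapid decay of the non-resonant half-wave contribution** (the paper's
claim that replacing `e^{-itP}` by `e^{itP}` produces an `O(λ^{-N})` kernel):
for Schwartz `Ψ`, `β ∈ C_c^∞` supported in `{1/2 < |t| < 2}` and every `N`
there is `C_N` such that for all `λ ≥ 2`, `1 ≤ μ ≤ T ≤ λ` and all `w ∈ ℝⁿ`,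
`|J_{λ,μ,T}(w)| ≤ C_N λ^{-N}`. -/
theorem nonResonantWaveKernel_rapid_decay
    (n : ℕ) (hn : 1 ≤ n) (Ψ : SchwartzMap ℝ ℂ) (β : ℝ → ℝ)
    (hβsm : ContDiff ℝ (⊤ : ℕ∞) β) (hβc : HasCompactSupport β)
    (hβsupp : Function.support β ⊆ {t : ℝ | 1 / 2 < |t| ∧ |t| < 2})
    (N : ℕ) :
    ∃ C : ℝ, 0 < C ∧
      ∀ lam μ T : ℝ, 2 ≤ lam → 1 ≤ μ → μ ≤ T → T ≤ lam →
        ∀ w : EuclideanSpace ℝ (Fin n),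
          ‖nonResonantWaveKernel n (fun s => Ψ s) β lam μ T w‖ ≤ C * lam ^ (-(N : ℝ)) :=
  nonResonantWaveKernel_rapid_decay_general n Ψ β hβsm hβsupp N
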